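/- arXiv:2101.12468 — 2 statements merged into one kernel-verified Lean document; each statement's English description precedes it below -/
import Mathlib

section
/- Let α, β be injective partial endomorphisms of the path P_n. Then α and β are L-related in the monoid IEnd(P_n) (i.e., there exist γ, δ ∈ IEnd(P_n) with α = γ∘β-style composition α = γβ and β = δα) if and only if Im α = Im β and the composite partial map αβ⁻¹ is a partial automorphism of P_n. -/
open scoped Classical

/-- `adj u v` means `|u - v| = 1`, i.e. `u` and `v` are adjacent in the path. -/
def adj (u v : ℕ) : Prop := u + 1 = v ∨ v + 1 = u

/-- `f` is an injective partial endomorphism of the path `P_n` on `{1,…,n}`. -/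
structure IsIEnd (n : ℕ) (f : ℕ →. ℕ) : Prop where
  dom_subset : f.Dom ⊆ Set.Icc 1 n
  ran_subset : f.ran ⊆ Set.Icc 1 n
  inj : ∀ ⦃x y a : ℕ⦄, a ∈ f x → a ∈ f y → x = y
  edge : ∀ ⦃u v a b : ℕ⦄, a ∈ f u → b ∈ f v → adj u v → adj a b

/-- `f` is a partial automorphism of the path `P_n`. -/
def IsPAut (n : ℕ) (f : ℕ →. ℕ) : Prop :=
  IsIEnd n f ∧ ∀ ⦃u v a b : ℕ⦄, a ∈ f u → b ∈ f v → adj a b → adj u v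

/-- Left-to-right composition of partial maps: `x (pcomp f g) = (x f) g`. -/
def pcomp (f g : ℕ →. ℕ) : ℕ →. ℕ := PFun.comp g f

/-- The inverse of an injective partial map. -/
noncomputable def pinv (f : ℕ →. ℕ) : ℕ →. ℕ :=
  fun y => ⟨∃ x, y ∈ f x, fun h => h.choose⟩

/-- `I` is an interval of `X`: a set of consecutive integers contained in `X`. -/
def IsIntervalOf (I X : Set ℕ) : Prop :=
  I ⊆ X ∧ ∀ ⦃x⦄, x ∈ I → ∀ ⦃y⦄, y ∈ I → ∀ ⦃z : ℕ⦄, x < z → z < y → z ∈ I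

/-- `I` is a maximal interval of `X`. -/
def IsMaxIntervalOf (I X : Set ℕ) : Prop :=
  IsIntervalOf I X ∧ ∀ J, IsIntervalOf J X → I ⊆ J → I = J

/-
Write `φ = α β⁻¹` and `ψ = β α⁻¹`; as relations these are converse to each other. If `α = γ β`
then, `β` being injective, the graph of `φ` is contained in that of `γ`, so `φ` inherits from `γ`
everything that makes it an injective partial endomorphism; likewise `ψ` from `δ`, and `ψ`
preserving adjacency is `φ` reflecting it. Conversely, `Im α = Im β` gives `α = φ β` and
`β = ψ α`, and `φ` being a partial automorphism makes both `φ` and `ψ` endomorphisms.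
-/

section PartialMaps

variable {f g : ℕ →. ℕ}

lemma mem_pinv (hf : ∀ ⦃x y a : ℕ⦄, a ∈ f x → a ∈ f y → x = y) {y a : ℕ} :
    a ∈ pinv f y ↔ y ∈ f a := by
  constructor
  · rintro ⟨h, rfl⟩
    exact h.choose_spec
  · intro h
    exact ⟨⟨a, h⟩, hf (Exists.choose_spec (⟨a, h⟩ : ∃ x, y ∈ f x)) h⟩

lemma mem_pcomp {x y : ℕ} : y ∈ pcomp f g x ↔ ∃ w, w ∈ f x ∧ y ∈ g w :=
  Part.mem_bind_iff

lemma mem_pcomp_pinv (hg : ∀ ⦃x y a : ℕ⦄, a ∈ g x → a ∈ g y → x = y) {x y : ℕ} :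
    y ∈ pcomp f (pinv g) x ↔ ∃ w, w ∈ f x ∧ w ∈ g y := by
  rw [mem_pcomp]
  exact exists_congr fun _ => and_congr_right fun _ => mem_pinv hg

lemma ran_pcomp_subset : (pcomp f g).ran ⊆ g.ran := by
  rintro y ⟨x, hy⟩
  obtain ⟨w, -, hw⟩ := mem_pcomp.mp hy
  exact ⟨w, hw⟩

lemma mem_pcomp_pinv_comm (hf : ∀ ⦃x y a : ℕ⦄, a ∈ f x → a ∈ f y → x = y)
    (hg : ∀ ⦃x y a : ℕ⦄, a ∈ g x → a ∈ g y → x = y) {x y : ℕ} :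
    y ∈ pcomp g (pinv f) x ↔ x ∈ pcomp f (pinv g) y := by
  rw [mem_pcomp_pinv hf, mem_pcomp_pinv hg]
  exact exists_congr fun _ => and_comm

lemma pcomp_pcomp_pinv_self (hg : ∀ ⦃x y a : ℕ⦄, a ∈ g x → a ∈ g y → x = y)
    (hran : f.ran ⊆ g.ran) : pcomp (pcomp f (pinv g)) g = f := by
  refine PFun.ext fun x y => ⟨fun hy => ?_, fun hy => ?_⟩
  · obtain ⟨u, hu, hyu⟩ := mem_pcomp.mp hy
    obtain ⟨w, hw, hwu⟩ := (mem_pcomp_pinv hg).mp hu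
    rwa [Part.mem_unique hyu hwu]
  · obtain ⟨u, hu⟩ := hran ⟨x, hy⟩
    exact mem_pcomp.mpr ⟨u, (mem_pcomp_pinv hg).mpr ⟨y, hy, hu⟩, hu⟩

lemma mem_of_mem_pcomp_pinv {h : ℕ →. ℕ} (hg : ∀ ⦃x y a : ℕ⦄, a ∈ g x → a ∈ g y → x = y)
    (hf : f = pcomp h g) {x y : ℕ} (hy : y ∈ pcomp f (pinv g) x) : y ∈ h x := by
  obtain ⟨w, hw, hwy⟩ := (mem_pcomp_pinv hg).mp hy
  obtain ⟨u, hu, hwu⟩ := mem_pcomp.mp (hf ▸ hw)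
  rwa [hg hwy hwu]

end PartialMaps

section PathMaps

variable {n : ℕ} {f g : ℕ →. ℕ}

lemma IsIEnd.mono (hg : IsIEnd n g) (hfg : ∀ x y, y ∈ f x → y ∈ g x) : IsIEnd n f where
  dom_subset x hx := by
    obtain ⟨y, hy⟩ := (PFun.mem_dom _ _).mp hx
    exact hg.dom_subset ((PFun.mem_dom _ _).mpr ⟨y, hfg _ _ hy⟩)
  ran_subset y := fun ⟨x, hy⟩ => hg.ran_subset ⟨x, hfg _ _ hy⟩
  inj _ _ _ hx hy := hg.inj (hfg _ _ hx) (hfg _ _ hy)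
  edge _ _ _ _ ha hb := hg.edge (hfg _ _ ha) (hfg _ _ hb)

lemma isPAut_iff_isIEnd_converse (hfg : ∀ x y, y ∈ g x ↔ x ∈ f y) :
    IsPAut n f ↔ IsIEnd n f ∧ IsIEnd n g := by
  refine ⟨fun ⟨hf, hrefl⟩ => ⟨hf, ?_⟩, fun ⟨hf, hg⟩ => ⟨hf, ?_⟩⟩
  · refine
      { dom_subset := fun y hy => ?_
        ran_subset := fun x ⟨y, hx⟩ =>
          hf.dom_subset ((PFun.mem_dom _ _).mpr ⟨y, (hfg y x).mp hx⟩)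
        inj := fun _ _ _ hx hy => Part.mem_unique ((hfg _ _).mp hx) ((hfg _ _).mp hy)
        edge := fun _ _ _ _ ha hb => hrefl ((hfg _ _).mp ha) ((hfg _ _).mp hb) }
    obtain ⟨x, hx⟩ := (PFun.mem_dom _ _).mp hy
    exact hf.ran_subset ⟨x, (hfg y x).mp hx⟩
  · exact fun _ _ _ _ ha hb => hg.edge ((hfg _ _).mpr ha) ((hfg _ _).mpr hb)

end PathMaps

theorem stmt6 (n : ℕ) (α β : ℕ →. ℕ) (hα : IsIEnd n α) (hβ : IsIEnd n β) :
    (∃ γ δ : ℕ →. ℕ, IsIEnd n γ ∧ IsIEnd n δ ∧ α = pcomp γ β ∧ β = pcomp δ α) ↔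
    (α.ran = β.ran ∧ IsPAut n (pcomp α (pinv β))) := by
  have hconverse : ∀ x y, y ∈ pcomp β (pinv α) x ↔ x ∈ pcomp α (pinv β) y :=
    fun _ _ => mem_pcomp_pinv_comm hα.inj hβ.inj
  rw [isPAut_iff_isIEnd_converse hconverse]
  constructor
  · rintro ⟨γ, δ, hγ, hδ, hαγ, hβδ⟩
    exact ⟨(hαγ ▸ ran_pcomp_subset).antisymm (hβδ ▸ ran_pcomp_subset),
      hγ.mono fun _ _ => mem_of_mem_pcomp_pinv hβ.inj hαγ,
      hδ.mono fun _ _ => mem_of_mem_pcomp_pinv hα.inj hβδ⟩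
  · rintro ⟨hran, hφ, hψ⟩
    exact ⟨_, _, hφ, hψ, (pcomp_pcomp_pinv_self hβ.inj hran.subset).symm,
      (pcomp_pcomp_pinv_self hα.inj hran.symm.subset).symm⟩
end

section
/- The number of injective partial endomorphisms of the path P_n with a prescribed nonempty domain D ⊆ {1,…,n} equals 2^T · r! · C(n−s+r, r), where r is the number of maximal intervals of D, s = |D|, and T is the number of maximal intervals of D of size at least 2. -/
open scoped Classical

/-!
On a maximal interval of `D` an injective partial endomorphism is an isometry onto an interval
of the same length, increasing or decreasing; the direction is a free choice exactly when the
interval has at least two points, which gives the factor `2 ^ T`. Distinct maximal intervals are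
never adjacent, so the only constraint between them is that their images are disjoint. It remains
to count placements of `r` labelled disjoint blocks of total length `s` in `{1,…,n}`: shortening
a block of length at least two by one cell is a bijection onto placements in `{1,…,n-1}`, and for
blocks of length one the placements are the injections of the labels into `{1,…,n - s + r}`,
of which there are `(n - s + r)! / (n - s)! = r! · C(n - s + r, r)`.
-/

open Set

theorem adj_comm {u v : ℕ} : adj u v ↔ adj v u := Or.comm

theorem PFun.exists_eq_res {α β : Type*} [Nonempty β] (f : α →. β) :
    ∃ g : α → β, f = PFun.res g f.Dom := by
  refine ⟨fun x => if h : (f x).Dom then (f x).get h else Classical.arbitrary β, ?_⟩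
  ext x b
  rw [PFun.mem_res]
  refine ⟨fun hb => ⟨Part.dom_iff_mem.2 ⟨b, hb⟩, ?_⟩, ?_⟩
  · rw [dif_pos (Part.dom_iff_mem.2 ⟨b, hb⟩)]
    exact Part.get_eq_of_mem hb _
  rintro ⟨hx, rfl⟩
  rw [dif_pos (show (f x).Dom from hx)]
  exact Part.get_mem hx

theorem PFun.res_eq_res_iff {α β : Type*} {g g' : α → β} {s : Set α} :
    PFun.res g s = PFun.res g' s ↔ EqOn g g' s := by
  refine ⟨fun h x hx => ?_, fun h => PFun.ext fun x b => ?_⟩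
  · have := (PFun.mem_res g s x (g x)).2 ⟨hx, rfl⟩
    rw [h, PFun.mem_res] at this
    exact this.2.symm
  · simp only [PFun.mem_res]
    exact and_congr_right fun hx => by rw [h hx]

theorem isIEnd_res_iff {n : ℕ} {D : Set ℕ} {g : ℕ → ℕ} (hD : D ⊆ Icc 1 n) :
    IsIEnd n (PFun.res g D) ↔
      MapsTo g D (Icc 1 n) ∧ InjOn g D ∧
        ∀ x ∈ D, x + 1 ∈ D → adj (g x) (g (x + 1)) := by
  have hmem : ∀ {x}, x ∈ D → g x ∈ PFun.res g D x := fun hx =>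
    (PFun.mem_res _ _ _ _).2 ⟨hx, rfl⟩
  refine ⟨fun hf => ⟨fun x hx => hf.ran_subset ⟨x, hmem hx⟩,
    fun x hx y hy h => hf.inj (hmem hx) (h ▸ hmem hy),
    fun x hx hx1 => hf.edge (hmem hx) (hmem hx1) (Or.inl rfl)⟩, ?_⟩
  rintro ⟨hmaps, hinj, hadj⟩
  simp only [PFun.mem_res] at *
  refine ⟨hD, ?_, ?_, ?_⟩
  · rintro _ ⟨x, hx, rfl⟩
    exact hmaps hx
  · rintro x y _ ⟨hx, rfl⟩ ⟨hy, hxy⟩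
    exact hinj hx hy hxy.symm
  · rintro u v _ _ ⟨hu, rfl⟩ ⟨hv, rfl⟩ (rfl | rfl)
    · exact hadj u hu hv
    · exact adj_comm.1 (hadj v hv hu)

section MaxIntervals

variable {I X : Set ℕ} {x : ℕ}

theorem isIntervalOf_iff : IsIntervalOf I X ↔ I ⊆ X ∧ I.OrdConnected := by
  refine and_congr_right fun _ => ⟨fun h => ⟨fun x hx y hy z hz => ?_⟩,
    fun h x hx y hy z hxz hzy => h.out hx hy ⟨hxz.le, hzy.le⟩⟩
  rcases hz.1.eq_or_lt with rfl | hxz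
  · exact hx
  rcases hz.2.eq_or_lt with rfl | hzy
  · exact hy
  exact h hx hy hxz hzy

theorem isMaxIntervalOf_ordConnectedComponent (hx : x ∈ X) :
    IsMaxIntervalOf (ordConnectedComponent X x) X := by
  refine ⟨isIntervalOf_iff.2 ⟨ordConnectedComponent_subset, inferInstance⟩,
    fun J hJ hsub => ?_⟩
  obtain ⟨hJX, hJc⟩ := isIntervalOf_iff.1 hJ
  exact hsub.antisymm
    (subset_ordConnectedComponent (hsub (self_mem_ordConnectedComponent.2 hx)) hJX)

theorem IsMaxIntervalOf.eq_ordConnectedComponent (hI : IsMaxIntervalOf I X) (hx : x ∈ I) :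
    I = ordConnectedComponent X x := by
  obtain ⟨hIX, hIc⟩ := isIntervalOf_iff.1 hI.1
  exact hI.2 _ (isMaxIntervalOf_ordConnectedComponent (hIX hx)).1
    (subset_ordConnectedComponent hx hIX)

theorem IsMaxIntervalOf.nonempty (hX : X.Nonempty) (hI : IsMaxIntervalOf I X) : I.Nonempty := by
  obtain ⟨x, hx⟩ := hX
  refine nonempty_iff_ne_empty.2 fun h => ?_
  subst h
  exact (nonempty_ordConnectedComponent.2 hx).ne_empty
    (hI.2 _ (isMaxIntervalOf_ordConnectedComponent hx).1 (empty_subset _)).symm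

theorem IsMaxIntervalOf.eq_Icc (hX : X.Nonempty) (hXb : BddAbove X) (hI : IsMaxIntervalOf I X) :
    I = Icc (sInf I) (sSup I) :=
  ((hI.nonempty hX).ordConnected_iff_of_bdd (OrderBot.bddBelow I)
    (hXb.mono (isIntervalOf_iff.1 hI.1).1)).1 (isIntervalOf_iff.1 hI.1).2

abbrev MaxIntervals (X : Set ℕ) : Set (Set ℕ) := {I | IsMaxIntervalOf I X}

def intervalContaining (hx : x ∈ X) : MaxIntervals X :=
  ⟨ordConnectedComponent X x, isMaxIntervalOf_ordConnectedComponent hx⟩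

theorem mem_intervalContaining (hx : x ∈ X) : x ∈ (intervalContaining hx).1 :=
  self_mem_ordConnectedComponent.2 hx

theorem intervalContaining_eq (hx : x ∈ X) {I : MaxIntervals X} (hxI : x ∈ I.1) :
    intervalContaining hx = I :=
  Subtype.ext (I.2.eq_ordConnectedComponent hxI).symm

theorem succ_mem_intervalContaining (hx : x ∈ X) (hx1 : x + 1 ∈ X) :
    x + 1 ∈ (intervalContaining hx).1 := by
  intro y hy
  rw [uIcc_of_le (by omega), mem_Icc] at hy
  rcases (show y = x ∨ y = x + 1 by omega) with rfl | rfl <;> assumption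

theorem maxIntervals_eq_image (hX : X.Nonempty) :
    MaxIntervals X = ordConnectedComponent X '' X := by
  ext I
  refine ⟨fun hI => ?_, ?_⟩
  · obtain ⟨x, hx⟩ := hI.nonempty hX
    exact ⟨x, (isIntervalOf_iff.1 hI.1).1 hx, (hI.eq_ordConnectedComponent hx).symm⟩
  · rintro ⟨x, hx, rfl⟩
    exact isMaxIntervalOf_ordConnectedComponent hx

theorem sum_ncard_maxIntervals [Fintype (MaxIntervals X)] (hX : X.Finite) :
    ∑ I : MaxIntervals X, I.1.ncard = X.ncard := by
  have := hX.to_subtype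
  have hfiber (I : MaxIntervals X) :
      {x : X // intervalContaining x.2 = I} ≃ I.1 :=
    (Equiv.subtypeSubtypeEquivSubtypeExists _ _).trans <| Equiv.subtypeEquivRight fun x =>
      ⟨fun ⟨hx, h⟩ => h ▸ mem_intervalContaining hx,
        fun h => ⟨(isIntervalOf_iff.1 I.2.1).1 h, intervalContaining_eq _ h⟩⟩
  rw [← Nat.card_coe_set_eq, ← Nat.card_congr (Equiv.sigmaFiberEquiv fun x : X =>
    intervalContaining x.2), Nat.card_sigma]
  exact Finset.sum_congr rfl fun I _ => by rw [Nat.card_congr (hfiber I), Nat.card_coe_set_eq]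

end MaxIntervals

theorem eq_add_or_eq_rev_of_injOn_of_adj {g : ℕ → ℕ} {a b : ℕ} (hab : a ≤ b)
    (hinj : InjOn g (Icc a b)) (hadj : ∀ x, a ≤ x → x < b → adj (g x) (g (x + 1))) :
    (∀ x ∈ Icc a b, g x = g a + (x - a)) ∨ (∀ x ∈ Icc a b, g x = g b + (b - x)) := by
  induction b, hab using Nat.le_induction with
  | base => left; intro x hx; rw [show x = a by simpa using hx]; simp
  | succ b hab ih =>
    have hstep := hadj b hab (by omega)
    unfold adj at hstep
    rcases hab.eq_or_lt with rfl | hlt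
    · have hpair : ∀ x ∈ Icc a (a + 1), x = a ∨ x = a + 1 := fun x hx => by
        rw [mem_Icc] at hx; omega
      rcases hstep with hup | hdown
      · left; intro x hx; rcases hpair x hx with rfl | rfl <;> omega
      · right; intro x hx; rcases hpair x hx with rfl | rfl <;> omega
    -- injectivity forbids reversing direction at `b`
    have hturn : g (b + 1) ≠ g (b - 1) := fun heq =>
      absurd (hinj ⟨by omega, le_rfl⟩ ⟨by omega, by omega⟩ heq) (by omega)
    have hcases : ∀ x ∈ Icc a (b + 1), x ∈ Icc a b ∨ x = b + 1 := fun x hx => by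
      rw [mem_Icc] at *; omega
    rcases ih (hinj.mono (Icc_subset_Icc_right b.le_succ)) fun x hx hxb => hadj x hx (by omega)
      with hinc | hdec
    · have := hinc b ⟨hab, le_rfl⟩
      have := hinc (b - 1) ⟨by omega, by omega⟩
      left; intro x hx
      rcases hcases x hx with hx | rfl
      · exact hinc x hx
      · omega
    · have := hdec (b - 1) ⟨by omega, by omega⟩
      right; intro x hx
      rcases hcases x hx with hx | rfl
      · have := hdec x hx; rw [mem_Icc] at hx; omega
      · simp

section IntervalMap

variable {rev rev' : Bool} {m m' a b x : ℕ}

def intervalMap (rev : Bool) (m a b x : ℕ) : ℕ := if rev then m + (b - x) else m + (x - a)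

theorem intervalMap_mem_Icc (hx : x ∈ Icc a b) :
    intervalMap rev m a b x ∈ Icc m (m + (b - a)) := by
  rw [mem_Icc] at *; unfold intervalMap; split <;> omega

theorem exists_intervalMap_eq {w : ℕ} (hab : a ≤ b) (hw : w ∈ Icc m (m + (b - a))) :
    ∃ x ∈ Icc a b, intervalMap rev m a b x = w := by
  rw [mem_Icc] at hw
  cases rev
  · refine ⟨a + (w - m), by rw [mem_Icc]; omega, ?_⟩
    simp only [intervalMap, Bool.false_eq_true, ↓reduceIte]
    omega
  · refine ⟨b - (w - m), by rw [mem_Icc]; omega, ?_⟩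
    simp only [intervalMap, ↓reduceIte]
    omega

theorem intervalMap_injOn : InjOn (intervalMap rev m a b) (Icc a b) := by
  intro x hx y hy h
  rw [mem_Icc] at hx hy
  unfold intervalMap at h; split at h <;> omega

theorem intervalMap_adj (hx : a ≤ x) (hxb : x < b) :
    adj (intervalMap rev m a b x) (intervalMap rev m a b (x + 1)) := by
  unfold intervalMap adj; split <;> omega

theorem eq_of_eqOn_intervalMap (hab : a ≤ b)
    (h : EqOn (intervalMap rev m a b) (intervalMap rev' m' a b) (Icc a b)) :
    (a < b → rev = rev') ∧ m = m' := by
  have ha := h ⟨le_rfl, hab⟩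
  have hb := h ⟨hab, le_rfl⟩
  cases rev <;> cases rev' <;>
    simp only [intervalMap, Bool.false_eq_true, ↓reduceIte] at ha hb <;>
    simp only [Bool.false_eq_true, Bool.true_eq_false, imp_false, not_lt,
      implies_true, true_and] <;> omega

theorem exists_eqOn_intervalMap {g : ℕ → ℕ} (hab : a ≤ b) (hinj : InjOn g (Icc a b))
    (hadj : ∀ x, a ≤ x → x < b → adj (g x) (g (x + 1))) :
    ∃ rev m, (rev = true → a < b) ∧ EqOn g (intervalMap rev m a b) (Icc a b) := by
  rcases hab.eq_or_lt with rfl | hlt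
  · refine ⟨false, g a, by simp, fun x hx => ?_⟩
    rw [show x = a by simpa using hx]; simp [intervalMap]
  rcases eq_add_or_eq_rev_of_injOn_of_adj hab hinj hadj with hinc | hdec
  · exact ⟨false, g a, by simp, fun x hx => hinc x hx⟩
  · exact ⟨true, g b, fun _ => hlt, fun x hx => hdec x hx⟩

end IntervalMap

section Placements

variable {ι : Type*}

-- `m i` is the first cell of the `i`-th block `Ico (m i) (m i + ℓ i)`; blocks are disjoint.
def Placements (n : ℕ) (ℓ : ι → ℕ) : Set (ι → ℕ) :=
  {m | (∀ i, 1 ≤ m i ∧ m i + ℓ i ≤ n + 1) ∧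
    Pairwise fun i j => m i + ℓ i ≤ m j ∨ m j + ℓ j ≤ m i}

variable {n : ℕ} {ℓ ℓ' : ι → ℕ} {i : ι}

-- Cut the last cell off the `i`-th block and move every block to its right one step left.
def shrinkBlock (i : ι) (m : ι → ℕ) : ι → ℕ :=
  fun j => if m i < m j then m j - 1 else m j

def growBlock (i : ι) (m : ι → ℕ) : ι → ℕ :=
  fun j => if m i < m j then m j + 1 else m j

theorem shrinkBlock_mem_placements (hi : ℓ' i + 1 = ℓ i) (hℓ' : ∀ j ≠ i, ℓ' j = ℓ j)
    (h2 : 1 ≤ ℓ' i) {m : ι → ℕ} (hm : m ∈ Placements (n + 1) ℓ) :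
    shrinkBlock i m ∈ Placements n ℓ' := by
  have hsep : ∀ j ≠ i, m i + ℓ i ≤ m j ∨ m j + ℓ j ≤ m i := fun j hj => hm.2 hj.symm
  refine ⟨fun j => ?_, fun j k hjk => ?_⟩
  · have := hm.1 j; have := hm.1 i
    simp only [shrinkBlock]
    by_cases hj : j = i
    · subst hj; simp only [lt_irrefl, if_false]; omega
    · have := hsep j hj; have := hℓ' j hj; split_ifs <;> omega
  · have := hm.1 j; have := hm.1 k; have := hm.2 hjk
    simp only [shrinkBlock]
    by_cases hj : j = i
    · subst hj; have := hsep k (Ne.symm hjk); have := hℓ' k (Ne.symm hjk); split_ifs <;> omega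
    by_cases hk : k = i
    · subst hk; have := hsep j hjk; have := hℓ' j hjk; split_ifs <;> omega
    have := hsep j hj; have := hsep k hk; have := hℓ' j hj; have := hℓ' k hk
    split_ifs <;> omega

theorem growBlock_mem_placements (hi : ℓ' i + 1 = ℓ i) (hℓ' : ∀ j ≠ i, ℓ' j = ℓ j)
    (h2 : 1 ≤ ℓ' i) {m : ι → ℕ} (hm : m ∈ Placements n ℓ') :
    growBlock i m ∈ Placements (n + 1) ℓ := by
  have hsep : ∀ j ≠ i, m i + ℓ' i ≤ m j ∨ m j + ℓ' j ≤ m i := fun j hj => hm.2 hj.symm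
  refine ⟨fun j => ?_, fun j k hjk => ?_⟩
  · have := hm.1 j; have := hm.1 i
    simp only [growBlock]
    by_cases hj : j = i
    · subst hj; simp only [lt_irrefl, if_false]; omega
    · have := hsep j hj; have := hℓ' j hj; split_ifs <;> omega
  · have := hm.1 j; have := hm.1 k; have := hm.2 hjk
    simp only [growBlock]
    by_cases hj : j = i
    · subst hj; have := hsep k (Ne.symm hjk); have := hℓ' k (Ne.symm hjk); split_ifs <;> omega
    by_cases hk : k = i
    · subst hk; have := hsep j hjk; have := hℓ' j hjk; split_ifs <;> omega
    have := hsep j hj; have := hsep k hk; have := hℓ' j hj; have := hℓ' k hk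
    split_ifs <;> omega

def placementsShrinkEquiv (hi : ℓ' i + 1 = ℓ i) (hℓ' : ∀ j ≠ i, ℓ' j = ℓ j)
    (h2 : 1 ≤ ℓ' i) :
    Placements (n + 1) ℓ ≃ Placements n ℓ' where
  toFun m := ⟨shrinkBlock i m, shrinkBlock_mem_placements hi hℓ' h2 m.2⟩
  invFun m := ⟨growBlock i m, growBlock_mem_placements hi hℓ' h2 m.2⟩
  left_inv := fun ⟨m, hm⟩ => Subtype.ext <| funext fun j => by
    have := hm.1 j
    by_cases hj : j = i
    · subst hj; simp [shrinkBlock, growBlock]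
    · have := hm.2 hj; simp only [shrinkBlock, growBlock]; split_ifs <;> omega
  right_inv := fun ⟨m, hm⟩ => Subtype.ext <| funext fun j => by
    by_cases hj : j = i
    · subst hj; simp [shrinkBlock, growBlock]
    · have := hm.2 hj; have := hℓ' j hj; simp only [shrinkBlock, growBlock]; split_ifs <;> omega

def placementsUnitEquiv (hℓ : ∀ i, ℓ i = 1) : Placements n ℓ ≃ (ι ↪ Fin n) where
  toFun m := ⟨fun i => ⟨m.1 i - 1, by have := m.2.1 i; have := hℓ i; omega⟩, fun i j h => by
    by_contra hij
    have := m.2.1 i; have := m.2.1 j; have := m.2.2 hij; have := hℓ i; have := hℓ j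
    simp only [Fin.mk.injEq] at h
    omega⟩
  invFun e := ⟨fun i => e i + 1, fun i => by have := (e i).2; have := hℓ i; dsimp only; omega,
    fun i j hij => by
      have := Fin.val_injective.ne (e.injective.ne hij); have := hℓ i; have := hℓ j
      dsimp only
      omega⟩
  left_inv := fun ⟨m, hm⟩ => Subtype.ext <| funext fun i => by
    have := hm.1 i; show m i - 1 + 1 = m i; omega
  right_inv e := by ext i; simp

theorem card_placements [Fintype ι] (n : ℕ) (ℓ : ι → ℕ) (hℓ : ∀ i, 1 ≤ ℓ i)
    (hs : ∑ i, ℓ i ≤ n) :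
    Nat.card (Placements n ℓ) =
      (n - ∑ i, ℓ i + Fintype.card ι).descFactorial (Fintype.card ι) := by
  induction hsum : ∑ i, ℓ i using Nat.strong_induction_on generalizing n ℓ with
  | _ s ih =>
  subst hsum
  by_cases hunit : ∀ i, ℓ i = 1
  · have hcard : ∑ i, ℓ i = Fintype.card ι := by simp [hunit]
    rw [Nat.card_congr (placementsUnitEquiv hunit), Nat.card_eq_fintype_card,
      Fintype.card_embedding_eq, Fintype.card_fin, hcard, Nat.sub_add_cancel (hcard ▸ hs)]
  obtain ⟨i, hi⟩ : ∃ i, 2 ≤ ℓ i := by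
    push Not at hunit; obtain ⟨i, hi⟩ := hunit; exact ⟨i, by have := hℓ i; omega⟩
  set ℓ' := Function.update ℓ i (ℓ i - 1)
  have hsum' : ∑ j, ℓ' j + 1 = ∑ j, ℓ j := by
    rw [Finset.sum_update_of_mem (Finset.mem_univ i),
      Finset.sum_eq_add_sum_sdiff_singleton_of_mem (Finset.mem_univ i) ℓ]
    omega
  obtain ⟨n, rfl⟩ : ∃ n', n = n' + 1 := ⟨n - 1, by omega⟩
  rw [Nat.card_congr (placementsShrinkEquiv (ℓ' := ℓ') (by simp [ℓ']; omega)
    (fun j hj => Function.update_of_ne hj _ _) (by simp [ℓ']; omega)),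
    ih _ (by omega) n ℓ' (fun j => by by_cases hj : j = i <;> simp [ℓ', hj, hℓ j]; omega)
      (by omega) rfl]
  congr 1
  omega

section Encoding

variable {n : ℕ} {D : Set ℕ}

noncomputable def gluedMap (rev : MaxIntervals D → Bool) (m : MaxIntervals D → ℕ) (x : ℕ) :
    ℕ :=
  if hx : x ∈ D then
    intervalMap (rev (intervalContaining hx)) (m (intervalContaining hx))
      (sInf (intervalContaining hx).1) (sSup (intervalContaining hx).1) x
  else 0

theorem gluedMap_of_mem {rev : MaxIntervals D → Bool} {m : MaxIntervals D → ℕ}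
    {I : MaxIntervals D} {x : ℕ} (hx : x ∈ I.1) :
    gluedMap rev m x = intervalMap (rev I) (m I) (sInf I.1) (sSup I.1) x := by
  have hxD := (isIntervalOf_iff.1 I.2.1).1 hx
  rw [gluedMap, dif_pos hxD, intervalContaining_eq hxD hx]

noncomputable def isReversed (o : {I : Set ℕ | IsMaxIntervalOf I D ∧ 2 ≤ I.ncard} → Bool)
    (I : MaxIntervals D) : Bool :=
  if h : 2 ≤ I.1.ncard then o ⟨I.1, I.2, h⟩ else false

variable (hne : D.Nonempty) (hD : D ⊆ Icc 1 n)
include hne hD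

theorem maxInterval_eq_Icc (I : MaxIntervals D) : I.1 = Icc (sInf I.1) (sSup I.1) :=
  IsMaxIntervalOf.eq_Icc hne (bddAbove_Icc.mono hD) I.2

theorem maxInterval_sInf_le_sSup (I : MaxIntervals D) : sInf I.1 ≤ sSup I.1 := by
  have := I.2.nonempty hne
  rw [maxInterval_eq_Icc hne hD I, nonempty_Icc] at this
  exact this

theorem ncard_maxInterval (I : MaxIntervals D) : I.1.ncard = sSup I.1 + 1 - sInf I.1 := by
  conv_lhs => rw [maxInterval_eq_Icc hne hD I]
  exact ncard_Icc_nat _ _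

theorem isIEnd_res_gluedMap (rev : MaxIntervals D → Bool) {m : MaxIntervals D → ℕ}
    (hm : m ∈ Placements n fun I : MaxIntervals D => I.1.ncard) :
    IsIEnd n (PFun.res (gluedMap rev m) D) := by
  have hrange : ∀ {I : MaxIntervals D} {x}, x ∈ I.1 →
      m I ≤ gluedMap rev m x ∧ gluedMap rev m x + 1 ≤ m I + I.1.ncard := fun {I x} hx => by
    have hmem := gluedMap_of_mem (rev := rev) (m := m) hx ▸
      intervalMap_mem_Icc (rev := rev I) (m := m I) (maxInterval_eq_Icc hne hD I ▸ hx)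
    have := ncard_maxInterval hne hD I
    have := maxInterval_sInf_le_sSup hne hD I
    rw [mem_Icc] at hmem
    omega
  rw [isIEnd_res_iff hD]
  refine ⟨fun x hx => ?_, fun x hx y hy hxy => ?_, fun x hx hx1 => ?_⟩
  · have := hrange (mem_intervalContaining hx)
    have := hm.1 (intervalContaining hx)
    dsimp only at this
    rw [mem_Icc]
    omega
  · have hxI := mem_intervalContaining hx
    have hyJ := mem_intervalContaining hy
    by_cases hIJ : intervalContaining hx = intervalContaining hy
    · rw [← hIJ] at hyJ
      rw [gluedMap_of_mem hxI, gluedMap_of_mem hyJ] at hxy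
      rw [maxInterval_eq_Icc hne hD] at hxI hyJ
      exact intervalMap_injOn hxI hyJ hxy
    · have := hrange hxI
      have := hrange hyJ
      have := hm.2 hIJ
      dsimp only at this
      omega
  · have hxI := mem_intervalContaining hx
    have hx1I := succ_mem_intervalContaining hx hx1
    rw [gluedMap_of_mem hxI, gluedMap_of_mem hx1I]
    rw [maxInterval_eq_Icc hne hD, mem_Icc] at hxI hx1I
    exact intervalMap_adj hxI.1 (by omega)

theorem eq_of_eqOn_gluedMap {rev rev' : MaxIntervals D → Bool} {m m' : MaxIntervals D → ℕ}
    (h : EqOn (gluedMap rev m) (gluedMap rev' m') D) (I : MaxIntervals D) :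
    (2 ≤ I.1.ncard → rev I = rev' I) ∧ m I = m' I := by
  have hI := maxInterval_eq_Icc hne hD I
  have hrun : EqOn (intervalMap (rev I) (m I) (sInf I.1) (sSup I.1))
      (intervalMap (rev' I) (m' I) (sInf I.1) (sSup I.1)) (Icc (sInf I.1) (sSup I.1)) :=
    fun x hx => by
      rw [← hI] at hx
      rw [← gluedMap_of_mem hx, ← gluedMap_of_mem hx]
      exact h ((isIntervalOf_iff.1 I.2.1).1 hx)
  have := eq_of_eqOn_intervalMap (maxInterval_sInf_le_sSup hne hD I) hrun
  rw [ncard_maxInterval hne hD I]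
  exact ⟨fun h2 => this.1 (by omega), this.2⟩

theorem exists_eqOn_gluedMap {g : ℕ → ℕ} (hinj : InjOn g D) (hmaps : MapsTo g D (Icc 1 n))
    (hadj : ∀ x ∈ D, x + 1 ∈ D → adj (g x) (g (x + 1))) :
    ∃ o, ∃ m ∈ Placements n (fun I : MaxIntervals D => I.1.ncard),
      EqOn g (gluedMap (isReversed o) m) D := by
  have hrun (I : MaxIntervals D) : ∃ rev m, (rev = true → sInf I.1 < sSup I.1) ∧
      EqOn g (intervalMap rev m (sInf I.1) (sSup I.1)) I.1 := by
    have hI := maxInterval_eq_Icc hne hD I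
    have hID := (isIntervalOf_iff.1 I.2.1).1
    rw [hI] at hID
    obtain ⟨rev, m, hrev, hg⟩ := exists_eqOn_intervalMap (maxInterval_sInf_le_sSup hne hD I)
      (hinj.mono hID) fun x hx hxb => hadj x (hID ⟨hx, hxb.le⟩) (hID ⟨by omega, hxb⟩)
    exact ⟨rev, m, hrev, fun x hx => hg (by rw [hI] at hx; exact hx)⟩
  choose rev m hrev hg using hrun
  have hrev' : isReversed (fun J => rev ⟨J.1, J.2.1⟩) = rev := funext fun I => by
    unfold isReversed
    split_ifs with h
    · rfl
    · have := ncard_maxInterval hne hD I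
      cases hI : rev I
      · rfl
      · have := hrev I hI; omega
  have hvalue {I : MaxIntervals D} {w : ℕ} (hw : w ∈ Icc (m I) (m I + (sSup I.1 - sInf I.1))) :
      ∃ x ∈ I.1, x ∈ D ∧ g x = w := by
    obtain ⟨x, hx, hxw⟩ :=
      exists_intervalMap_eq (rev := rev I) (maxInterval_sInf_le_sSup hne hD I) hw
    rw [← maxInterval_eq_Icc hne hD I] at hx
    exact ⟨x, hx, (isIntervalOf_iff.1 I.2.1).1 hx, hg I hx ▸ hxw⟩
  refine ⟨fun J => rev ⟨J.1, J.2.1⟩, m, ⟨fun I => ?_, fun I J hIJ => ?_⟩,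
    fun x hx => ?_⟩
  · obtain ⟨x, -, hx, hxm⟩ := hvalue (I := I) (w := m I) (by simp)
    obtain ⟨y, -, hy, hym⟩ := hvalue (I := I) (w := m I + (sSup I.1 - sInf I.1)) (by simp)
    have := hmaps hx
    have := hmaps hy
    have := ncard_maxInterval hne hD I
    rw [mem_Icc] at *
    dsimp only
    omega
  · by_contra hsep
    dsimp only at hsep
    have := ncard_maxInterval hne hD I
    have := ncard_maxInterval hne hD J
    obtain ⟨x, hxI, hx, hxw⟩ := hvalue (I := I) (w := max (m I) (m J)) (by rw [mem_Icc]; omega)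
    obtain ⟨y, hyJ, hy, hyw⟩ := hvalue (I := J) (w := max (m I) (m J)) (by rw [mem_Icc]; omega)
    obtain rfl : x = y := hinj hx hy (hxw.trans hyw.symm)
    exact hIJ ((intervalContaining_eq hx hxI).symm.trans (intervalContaining_eq hx hyJ))
  · rw [hrev', gluedMap_of_mem (mem_intervalContaining hx)]
    exact hg _ (mem_intervalContaining hx)

theorem card_isIEnd_dom_eq :
    Nat.card {f : ℕ →. ℕ | IsIEnd n f ∧ f.Dom = D} =
      Nat.card ({I : Set ℕ | IsMaxIntervalOf I D ∧ 2 ≤ I.ncard} → Bool) *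
        Nat.card (Placements n fun I : MaxIntervals D => I.1.ncard) := by
  rw [← Nat.card_prod]
  refine (Nat.card_congr (Equiv.ofBijective (fun p =>
    ⟨PFun.res (gluedMap (isReversed p.1) p.2) D, isIEnd_res_gluedMap hne hD _ p.2.2, rfl⟩)
    ⟨?_, ?_⟩)).symm
  · rintro ⟨o, m, hm⟩ ⟨o', m', hm'⟩ h
    have h := eq_of_eqOn_gluedMap hne hD (PFun.res_eq_res_iff.1 (congrArg Subtype.val h))
    refine Prod.ext (funext fun J => ?_) (Subtype.ext (funext fun I => (h I).2))
    have := (h ⟨J.1, J.2.1⟩).1 J.2.2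
    simpa [isReversed, J.2.2] using this
  · rintro ⟨f, hf, hdom⟩
    obtain ⟨g, hg⟩ := PFun.exists_eq_res f
    rw [hdom] at hg
    subst hg
    obtain ⟨hmaps, hinj, hadj⟩ := (isIEnd_res_iff hD).1 hf
    obtain ⟨o, m, hm, hg⟩ := exists_eqOn_gluedMap hne hD hinj hmaps hadj
    exact ⟨(o, ⟨m, hm⟩), Subtype.ext (PFun.res_eq_res_iff.2 hg.symm)⟩

end Encoding

theorem stmt13 (n : ℕ) (D : Set ℕ) (hne : D.Nonempty) (hD : D ⊆ Set.Icc 1 n) :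
    {f : ℕ →. ℕ | IsIEnd n f ∧ f.Dom = D}.ncard =
      2 ^ {I : Set ℕ | IsMaxIntervalOf I D ∧ 2 ≤ I.ncard}.ncard *
        Nat.factorial {I : Set ℕ | IsMaxIntervalOf I D}.ncard *
        Nat.choose (n - D.ncard + {I : Set ℕ | IsMaxIntervalOf I D}.ncard)
          {I : Set ℕ | IsMaxIntervalOf I D}.ncard := by
  have hDfin : D.Finite := (finite_Icc 1 n).subset hD
  have hfin : (MaxIntervals D).Finite := by
    rw [maxIntervals_eq_image hne]
    exact hDfin.image _
  have := hfin.fintype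
  have : Finite {I : Set ℕ | IsMaxIntervalOf I D ∧ 2 ≤ I.ncard} :=
    (hfin.subset fun _ h => h.1).to_subtype
  have hr : Fintype.card (MaxIntervals D) = (MaxIntervals D).ncard := by
    rw [← Nat.card_eq_fintype_card, Nat.card_coe_set_eq]
  have hDn : D.ncard ≤ n := (ncard_le_ncard hD (finite_Icc 1 n)).trans_eq (by simp)
  have hpos (I : MaxIntervals D) : 1 ≤ I.1.ncard :=
    (ncard_pos (hDfin.subset (isIntervalOf_iff.1 I.2.1).1)).2 (I.2.nonempty hne)
  rw [← Nat.card_coe_set_eq, card_isIEnd_dom_eq hne hD, Nat.card_fun, Nat.card_coe_set_eq,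
    Nat.card_eq_fintype_card (α := Bool), Fintype.card_bool,
    card_placements n _ hpos (by rwa [sum_ncard_maxIntervals hDfin]),
    sum_ncard_maxIntervals hDfin, hr, Nat.descFactorial_eq_factorial_mul_choose, mul_assoc]
end Placements
end
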